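/- arXiv:1304.6371 — 3 statements merged into one kernel-verified Lean document; each statement's English description precedes it below -/
import Mathlib

section
/- Let (R, ⊕, ·) be a semihyperring. Then R is regular if and only if for every fuzzy right hyperideal λ and every fuzzy left hyperideal μ of R, min(λ, μ) = λ ∘ μ (pointwise), where (λ ∘ μ)(x) = sup{min(λ(y), μ(z)) : y, z ∈ R, x = y·z} (the supremum over the empty set being 0). -/
/-- The unit interval `[0,1]` is a complete lattice. -/
noncomputable instance : Fact ((0:ℝ) ≤ 1) := ⟨zero_le_one⟩

/-- A semihyperring `(R, ⊕, ·)`: a hyperoperation `hadd` (with nonempty values),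
a binary multiplication `mul`, and an element `zero`, satisfying commutativity and
(extended) associativity of `⊕`, associativity of `·`, two-sided distributivity of
`·` over `⊕` (as sets), and `0 ⊕ x = {x}`, `0·x = 0 = x·0`. -/
class Semihyperring (R : Type*) where
  hadd : R → R → Set R
  mul : R → R → R
  zero : R
  hadd_nonempty : ∀ x y : R, (hadd x y).Nonempty
  hadd_comm : ∀ x y : R, hadd x y = hadd y x
  hadd_assoc : ∀ x y z : R, (⋃ w ∈ hadd y z, hadd x w) = ⋃ w ∈ hadd x y, hadd w z
  mul_assoc : ∀ x y z : R, mul (mul x y) z = mul x (mul y z)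
  left_distrib : ∀ x y z : R, (fun w => mul x w) '' hadd y z = hadd (mul x y) (mul x z)
  right_distrib : ∀ x y z : R, (fun w => mul w z) '' hadd x y = hadd (mul x z) (mul y z)
  zero_hadd : ∀ x : R, hadd zero x = {x}
  hadd_zero : ∀ x : R, hadd x zero = {x}
  zero_mul : ∀ x : R, mul zero x = zero
  mul_zero : ∀ x : R, mul x zero = zero

namespace Semihyperring

variable {R : Type*} [Semihyperring R]

/-- The hyperoperation `⊕` extended to subsets: `A ⊕ B = ⋃ {a ⊕ b : a ∈ A, b ∈ B}`. -/
def haddSet (A B : Set R) : Set R := ⋃ a ∈ A, ⋃ b ∈ B, hadd a b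

/-- The hypersum `x₁ ⊕ x₂ ⊕ ⋯ ⊕ xₚ` of a list of elements (the empty hypersum is `{0}`,
which is neutral since `0 ⊕ x = {x}`). -/
def hsumList : List R → Set R
  | [] => {zero}
  | x :: xs => haddSet {x} (hsumList xs)

/-- A (two-sided) hyperideal: a nonempty subset closed under `⊕` and under
multiplication by arbitrary elements of `R` on both sides. -/
def IsHyperideal (I : Set R) : Prop :=
  I.Nonempty ∧ (∀ x ∈ I, ∀ y ∈ I, hadd x y ⊆ I) ∧
    (∀ r : R, ∀ x ∈ I, mul r x ∈ I ∧ mul x r ∈ I)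

/-- A right hyperideal. -/
def IsRightHyperideal (I : Set R) : Prop :=
  I.Nonempty ∧ (∀ x ∈ I, ∀ y ∈ I, hadd x y ⊆ I) ∧ (∀ x ∈ I, ∀ r : R, mul x r ∈ I)

/-- A left hyperideal. -/
def IsLeftHyperideal (I : Set R) : Prop :=
  I.Nonempty ∧ (∀ x ∈ I, ∀ y ∈ I, hadd x y ⊆ I) ∧ (∀ x ∈ I, ∀ r : R, mul r x ∈ I)

/-- The product of two subsets:
`AB = {x : x ∈ a₁b₁ ⊕ ⋯ ⊕ aₚbₚ for some p ≥ 1, aᵢ ∈ A, bᵢ ∈ B}`. -/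
def setProd (A B : Set R) : Set R :=
  {x | ∃ l : List (R × R), l ≠ [] ∧ (∀ p ∈ l, p.1 ∈ A ∧ p.2 ∈ B) ∧
    x ∈ hsumList (l.map fun p => mul p.1 p.2)}

/-- `R` is fully idempotent if every hyperideal `I` satisfies `I² = I`. -/
def FullyIdempotent (R : Type*) [Semihyperring R] : Prop :=
  ∀ I : Set R, IsHyperideal I → setProd I I = I

/-- `R` is (von Neumann) regular if every `x` satisfies `x = x·a·x` for some `a`. -/
def Regular (R : Type*) [Semihyperring R] : Prop :=
  ∀ x : R, ∃ a : R, x = mul (mul x a) x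

/-- A fuzzy hyperideal of `R`: a function `μ : R → [0,1]` with
`inf {μ z : z ∈ x ⊕ y} ≥ min (μ x) (μ y)` and `μ (x·y) ≥ max (μ x) (μ y)`. -/
def IsFuzzyHyperideal (μ : R → unitInterval) : Prop :=
  (∀ x y : R, μ x ⊓ μ y ≤ ⨅ z ∈ hadd x y, μ z) ∧
  (∀ x y : R, μ x ⊔ μ y ≤ μ (mul x y))

/-- A fuzzy right hyperideal: `inf {λ z : z ∈ x ⊕ y} ≥ min (λ x) (λ y)` and `λ (x·y) ≥ λ x`. -/
def IsFuzzyRightHyperideal (μ : R → unitInterval) : Prop :=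
  (∀ x y : R, μ x ⊓ μ y ≤ ⨅ z ∈ hadd x y, μ z) ∧
  (∀ x y : R, μ x ≤ μ (mul x y))

/-- A fuzzy left hyperideal: `inf {λ z : z ∈ x ⊕ y} ≥ min (λ x) (λ y)` and `λ (x·y) ≥ λ y`. -/
def IsFuzzyLeftHyperideal (μ : R → unitInterval) : Prop :=
  (∀ x y : R, μ x ⊓ μ y ≤ ⨅ z ∈ hadd x y, μ z) ∧
  (∀ x y : R, μ y ≤ μ (mul x y))

/-- The product `λμ` of fuzzy subsets:
`(λμ)(x) = ⋁ { ⋀_{1≤i≤p} (λ yᵢ ⊓ μ zᵢ) : p ≥ 1, x ∈ y₁z₁ ⊕ ⋯ ⊕ yₚzₚ }`. -/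
noncomputable def fprod (lam mu : R → unitInterval) (x : R) : unitInterval :=
  sSup {t | ∃ l : List (R × R), l ≠ [] ∧
    x ∈ hsumList (l.map fun p => mul p.1 p.2) ∧
    t = ⨅ p ∈ l, lam p.1 ⊓ mu p.2}

/-- The sum `λ ⊕ μ` of fuzzy subsets:
`(λ ⊕ μ)(x) = ⋁ { λ y ⊓ μ z : x ∈ y ⊕ z }`. -/
noncomputable def fsum (lam mu : R → unitInterval) (x : R) : unitInterval :=
  sSup {t | ∃ y z : R, x ∈ hadd y z ∧ t = lam y ⊓ mu z}

/-- The composition `λ ∘ μ` of fuzzy subsets: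
`(λ ∘ μ)(x) = ⋁ { λ y ⊓ μ z : x = y·z }` (with `⋁ ∅ = 0`). -/
noncomputable def fcomp (lam mu : R → unitInterval) (x : R) : unitInterval :=
  sSup {t | ∃ y z : R, x = mul y z ∧ t = lam y ⊓ mu z}

/-- A fuzzy prime hyperideal: a fuzzy hyperideal `η` such that for all fuzzy hyperideals
`λ, μ`, `λμ ≤ η` implies `λ ≤ η` or `μ ≤ η`. -/
def IsFuzzyPrimeHyperideal (η : R → unitInterval) : Prop :=
  IsFuzzyHyperideal η ∧ ∀ lam mu : R → unitInterval, IsFuzzyHyperideal lam →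
    IsFuzzyHyperideal mu → fprod lam mu ≤ η → lam ≤ η ∨ mu ≤ η

/-- A fuzzy irreducible hyperideal: a fuzzy hyperideal `η` such that for all fuzzy
hyperideals `λ, μ`, `min (λ, μ) = η` (pointwise) implies `λ = η` or `μ = η`. -/
def IsFuzzyIrreducibleHyperideal (η : R → unitInterval) : Prop :=
  IsFuzzyHyperideal η ∧ ∀ lam mu : R → unitInterval, IsFuzzyHyperideal lam →
    IsFuzzyHyperideal mu → lam ⊓ mu = η → lam = η ∨ mu = η

/-- `FP R`: the set of proper fuzzy prime hyperideals of `R`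
(`η` is proper if it is not the constant function `1`). -/
def FP (R : Type*) [Semihyperring R] : Set (R → unitInterval) :=
  {η | IsFuzzyPrimeHyperideal η ∧ η ≠ fun _ => 1}

/-- `O λ = {μ ∈ FP R : λ ≰ μ}`. -/
def O (lam : R → unitInterval) : Set (R → unitInterval) :=
  {mu ∈ FP R | ¬ lam ≤ mu}

/-- The sum `Σᵢ ηᵢ` of an arbitrary family of fuzzy subsets:
`(Σᵢ ηᵢ)(x) = ⋁ { ⋀_{1≤k≤p} η_{i_k} (x_k) : p ≥ 1, x ∈ x₁ ⊕ ⋯ ⊕ xₚ }`. -/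
noncomputable def famSum {ι : Type*} (η : ι → R → unitInterval) (x : R) : unitInterval :=
  sSup {t | ∃ l : List (ι × R), l ≠ [] ∧ x ∈ hsumList (l.map Prod.snd) ∧
    t = ⨅ p ∈ l, η p.1 p.2}

end Semihyperring


/-!
If `R` is regular and `x = x·a·x`, then `λ x ⊓ μ x ≤ λ (x·a) ⊓ μ x ≤ (λ ∘ μ) x`, while
`λ ∘ μ ≤ λ ⊓ μ` holds for any fuzzy right hyperideal `λ` and fuzzy left hyperideal `μ`.
Conversely, applying `λ ⊓ μ = λ ∘ μ` to the indicators of the right and the left hyperideal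
generated by `x` factors `x = y·z` with `y ∈ (x)ᵣ` and `z ∈ (x)ₗ`. Every such product lies in
any `⊕`-closed set containing `x·x` and all `x·a·x`. Taking the set of `w` with `x·w ∈ xRx`
gives `x·x = x·(y·z) ∈ xRx`, and then taking `xRx` itself gives `x = y·z ∈ xRx`.
-/

namespace Semihyperring

variable {R : Type*} [Semihyperring R]

def HaddClosed (P : Set R) : Prop :=
  ∀ a ∈ P, ∀ b ∈ P, hadd a b ⊆ P

lemma HaddClosed.preimage_mul_left {P : Set R} (hP : HaddClosed P) (c : R) :
    HaddClosed {w | mul c w ∈ P} := by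
  intro a ha b hb w hw
  exact hP _ ha _ hb (left_distrib c a b ▸ ⟨w, hw, rfl⟩)

lemma haddClosed_mul_mul (x : R) : HaddClosed {w | ∃ a, w = mul (mul x a) x} := by
  rintro _ ⟨a, rfl⟩ _ ⟨b, rfl⟩ w hw
  rw [← right_distrib, ← left_distrib] at hw
  obtain ⟨_, ⟨c, -, rfl⟩, rfl⟩ := hw
  exact ⟨c, rfl⟩

inductive MemRightSpan (x : R) : R → Prop
  | self : MemRightSpan x x
  | mul_right {y : R} (r : R) : MemRightSpan x y → MemRightSpan x (mul y r)
  | hadd {y z w : R} : MemRightSpan x y → MemRightSpan x z → w ∈ hadd y z → MemRightSpan x w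

inductive MemLeftSpan (x : R) : R → Prop
  | self : MemLeftSpan x x
  | mul_left {y : R} (r : R) : MemLeftSpan x y → MemLeftSpan x (mul r y)
  | hadd {y z w : R} : MemLeftSpan x y → MemLeftSpan x z → w ∈ hadd y z → MemLeftSpan x w

lemma mul_mem_of_memLeftSpan {P : Set R} (hP : HaddClosed P) {x z : R}
    (hz : MemLeftSpan x z) : ∀ {t : R}, mul t x ∈ P → (∀ a, mul (mul t a) x ∈ P) →
      mul t z ∈ P := by
  induction hz with
  | self => exact fun htx _ => htx
  | mul_left r _ ih =>
    intro t _ hta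
    rw [← mul_assoc]
    exact ih (hta r) fun a => mul_assoc t r a ▸ hta (mul r a)
  | hadd _ _ hw ih₁ ih₂ =>
    intro t htx hta
    exact hP _ (ih₁ htx hta) _ (ih₂ htx hta) (left_distrib t _ _ ▸ ⟨_, hw, rfl⟩)

lemma mul_mem_of_memRightSpan_of_memLeftSpan {P : Set R} (hP : HaddClosed P) {x y z : R}
    (hxx : mul x x ∈ P) (hxax : ∀ a, mul (mul x a) x ∈ P)
    (hy : MemRightSpan x y) (hz : MemLeftSpan x z) : mul y z ∈ P := by
  induction hy generalizing z with
  | self => exact mul_mem_of_memLeftSpan hP hz hxx hxax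
  | mul_right r _ ih =>
    rw [mul_assoc]
    exact ih (hz.mul_left r)
  | hadd _ _ hw ih₁ ih₂ =>
    exact hP _ (ih₁ hz) _ (ih₂ hz) (right_distrib _ _ z ▸ ⟨_, hw, rfl⟩)

lemma exists_eq_mul_mul_of_eq_mul {x y z : R} (hxyz : x = mul y z)
    (hy : MemRightSpan x y) (hz : MemLeftSpan x z) : ∃ a, x = mul (mul x a) x := by
  have hK := haddClosed_mul_mul x
  have hxx : mul x x ∈ {w | ∃ a, w = mul (mul x a) x} := by
    have := mul_mem_of_memRightSpan_of_memLeftSpan (hK.preimage_mul_left x)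
      ⟨x, (mul_assoc x x x).symm⟩ (fun a => ⟨mul x a, (mul_assoc x _ x).symm⟩) hy hz
    rwa [← hxyz] at this
  have hx := mul_mem_of_memRightSpan_of_memLeftSpan hK hxx (fun a => ⟨a, rfl⟩) hy hz
  rwa [← hxyz] at hx

lemma fcomp_le_inf {lam mu : R → unitInterval} (hlam : ∀ x y, lam x ≤ lam (mul x y))
    (hmu : ∀ x y, mu y ≤ mu (mul x y)) : fcomp lam mu ≤ lam ⊓ mu := by
  intro x
  refine sSup_le ?_
  rintro _ ⟨y, z, rfl, rfl⟩
  exact inf_le_inf (hlam y z) (hmu y z)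

lemma inf_le_fcomp_of_regular (hR : Regular R) {lam : R → unitInterval}
    (hlam : ∀ x y, lam x ≤ lam (mul x y)) (mu : R → unitInterval) :
    lam ⊓ mu ≤ fcomp lam mu := by
  intro x
  obtain ⟨a, ha⟩ := hR x
  calc lam x ⊓ mu x ≤ lam (mul x a) ⊓ mu x := inf_le_inf_right _ (hlam x a)
    _ ≤ fcomp lam mu x := le_sSup ⟨mul x a, x, ha, rfl⟩

lemma indicator_one_le_of_imp {α : Type*} {I : Set α} {a b : α} (h : a ∈ I → b ∈ I) :
    I.indicator (1 : α → unitInterval) a ≤ I.indicator 1 b := by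
  by_cases ha : a ∈ I
  · simp [ha, h ha]
  · simp [ha]

lemma indicator_one_inf_le_iInf_hadd {I : Set R} (hI : HaddClosed I) (a b : R) :
    I.indicator 1 a ⊓ I.indicator 1 b ≤
      ⨅ z ∈ hadd a b, I.indicator (1 : R → unitInterval) z := by
  refine le_iInf₂ fun w hw => ?_
  by_cases ha : a ∈ I
  · exact inf_le_right.trans (indicator_one_le_of_imp fun hb => hI a ha b hb hw)
  · simp [ha]

lemma isFuzzyRightHyperideal_indicator_one {I : Set R} (hI : HaddClosed I)
    (hmul : ∀ a ∈ I, ∀ r, mul a r ∈ I) : IsFuzzyRightHyperideal (I.indicator 1) :=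
  ⟨indicator_one_inf_le_iInf_hadd hI, fun a r => indicator_one_le_of_imp (hmul a · r)⟩

lemma isFuzzyLeftHyperideal_indicator_one {I : Set R} (hI : HaddClosed I)
    (hmul : ∀ a ∈ I, ∀ r, mul r a ∈ I) : IsFuzzyLeftHyperideal (I.indicator 1) :=
  ⟨indicator_one_inf_le_iInf_hadd hI, fun r a => indicator_one_le_of_imp (hmul a · r)⟩

lemma exists_eq_mul_of_fcomp_indicator_one_ne_zero {A B : Set R} {x : R}
    (hx : fcomp (A.indicator 1) (B.indicator 1) x ≠ 0) :
    ∃ y ∈ A, ∃ z ∈ B, x = mul y z := by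
  by_contra! hAB
  refine hx (le_antisymm (sSup_le ?_) unitInterval.nonneg')
  rintro _ ⟨y, z, hyz, rfl⟩
  by_cases hy : y ∈ A
  · have hz : z ∉ B := fun hz => hAB y hy z hz hyz
    simp [hz]
  · simp [hy]

end Semihyperring

open Semihyperring in
/-- `R` is regular iff `min (λ, μ) = λ ∘ μ` for every fuzzy right hyperideal
`λ` and every fuzzy left hyperideal `μ` of `R`. -/
theorem regular_iff_inf_eq_fcomp (R : Type*) [Semihyperring R] :
    Regular R ↔
      ∀ lam mu : R → unitInterval, IsFuzzyRightHyperideal lam →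
        IsFuzzyLeftHyperideal mu → lam ⊓ mu = fcomp lam mu := by
  refine ⟨fun hR lam mu hlam hmu =>
    le_antisymm (inf_le_fcomp_of_regular hR hlam.2 mu) (fcomp_le_inf hlam.2 hmu.2), ?_⟩
  intro h x
  set A := {w | MemRightSpan x w}
  set B := {w | MemLeftSpan x w}
  have hAB := h (A.indicator 1) (B.indicator 1)
    (isFuzzyRightHyperideal_indicator_one (fun _ ha _ hb _ => MemRightSpan.hadd ha hb)
      fun _ ha r => ha.mul_right r)
    (isFuzzyLeftHyperideal_indicator_one (fun _ ha _ hb _ => MemLeftSpan.hadd ha hb)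
      fun _ ha r => ha.mul_left r)
  have hx : fcomp (A.indicator 1) (B.indicator 1) x ≠ 0 := by
    rw [← hAB]
    simp [A, B, MemRightSpan.self, MemLeftSpan.self]
  obtain ⟨y, hy, z, hz, hxyz⟩ := exists_eq_mul_of_fcomp_indicator_one_ne_zero hx
  exact exists_eq_mul_mul_of_eq_mul hxyz hy hz
end

section
/- Let (R, ⊕, ·) be a fully idempotent semihyperring. For fuzzy hyperideals δ₁, δ₂ of R, O_{δ₁} = O_{δ₂} if and only if δ₁ = δ₂. -/
namespace Semihyperring

variable {R : Type*} [Semihyperring R]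

theorem mem_haddSet {A B : Set R} {z : R} :
    z ∈ haddSet A B ↔ ∃ a ∈ A, ∃ b ∈ B, z ∈ hadd a b := by
  simp [haddSet]

theorem mem_hadd_assoc {x y z w t : R} (hw : w ∈ hadd y z) (ht : t ∈ hadd x w) :
    ∃ v ∈ hadd x y, t ∈ hadd v z := by
  have ht' : t ∈ ⋃ w ∈ hadd y z, hadd x w := Set.mem_biUnion hw ht
  rw [hadd_assoc] at ht'
  simpa using ht'

theorem mem_hadd_assoc_symm {x y z v t : R} (hv : v ∈ hadd x y) (ht : t ∈ hadd v z) :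
    ∃ w ∈ hadd y z, t ∈ hadd x w := by
  have ht' : t ∈ ⋃ v ∈ hadd x y, hadd v z := Set.mem_biUnion hv ht
  rw [← hadd_assoc] at ht'
  simpa using ht'

theorem mem_hadd_hadd_comm {p i q j x y z : R} (hx : x ∈ hadd p i) (hy : y ∈ hadd q j)
    (hz : z ∈ hadd x y) : ∃ w ∈ hadd p q, ∃ k ∈ hadd i j, z ∈ hadd w k := by
  obtain ⟨v, hv, hzv⟩ := mem_hadd_assoc_symm hx hz
  rw [hadd_comm] at hv
  obtain ⟨u, hu, hvu⟩ := mem_hadd_assoc_symm hy hv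
  obtain ⟨w, hw, hzw⟩ := mem_hadd_assoc hvu hzv
  exact ⟨w, hw, u, hadd_comm j i ▸ hu, hzw⟩

theorem mul_mem_hadd_mul_left {x y z : R} (r : R) (hz : z ∈ hadd x y) :
    mul r z ∈ hadd (mul r x) (mul r y) :=
  left_distrib r x y ▸ ⟨z, hz, rfl⟩

theorem mul_mem_hadd_mul_right {x y z : R} (r : R) (hz : z ∈ hadd x y) :
    mul z r ∈ hadd (mul x r) (mul y r) :=
  right_distrib x y r ▸ ⟨z, hz, rfl⟩

theorem mul_mem_setProd {A B : Set R} {x y : R} (hx : x ∈ A) (hy : y ∈ B) :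
    mul x y ∈ setProd A B :=
  ⟨[(x, y)], by simp, by simpa using ⟨hx, hy⟩, by simp [hsumList, haddSet, hadd_zero]⟩

/-- Allowing `∅` keeps Zorn's lemma applicable when the point to avoid is `zero`, which every
hyperideal contains. -/
def IsHyperidealOrEmpty (P : Set R) : Prop :=
  (∀ x ∈ P, ∀ y ∈ P, hadd x y ⊆ P) ∧ ∀ r : R, ∀ x ∈ P, mul r x ∈ P ∧ mul x r ∈ P

theorem IsHyperideal.isHyperidealOrEmpty {I : Set R} (hI : IsHyperideal I) :
    IsHyperidealOrEmpty I :=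
  hI.2

theorem IsHyperidealOrEmpty.isHyperideal {P : Set R} (hP : IsHyperidealOrEmpty P)
    (hne : P.Nonempty) : IsHyperideal P :=
  ⟨hne, hP⟩

theorem IsHyperidealOrEmpty.inter {P Q : Set R} (hP : IsHyperidealOrEmpty P)
    (hQ : IsHyperidealOrEmpty Q) : IsHyperidealOrEmpty (P ∩ Q) :=
  ⟨fun x hx y hy => Set.subset_inter (hP.1 x hx.1 y hy.1) (hQ.1 x hx.2 y hy.2),
    fun r x hx => ⟨⟨(hP.2 r x hx.1).1, (hQ.2 r x hx.2).1⟩, ⟨(hP.2 r x hx.1).2, (hQ.2 r x hx.2).2⟩⟩⟩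

theorem IsHyperidealOrEmpty.sUnion {c : Set (Set R)} (hc : ∀ P ∈ c, IsHyperidealOrEmpty P)
    (hchain : IsChain (· ⊆ ·) c) : IsHyperidealOrEmpty (⋃₀ c) := by
  refine ⟨fun x ⟨P, hP, hx⟩ y ⟨Q, hQ, hy⟩ => ?_, fun r x ⟨P, hP, hx⟩ =>
    ⟨⟨P, hP, ((hc P hP).2 r x hx).1⟩, ⟨P, hP, ((hc P hP).2 r x hx).2⟩⟩⟩
  rcases hchain.total hP hQ with hPQ | hQP
  · exact ((hc Q hQ).1 x (hPQ hx) y hy).trans (Set.subset_sUnion_of_mem hQ)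
  · exact ((hc P hP).1 x hx y (hQP hy)).trans (Set.subset_sUnion_of_mem hP)

theorem IsHyperidealOrEmpty.haddSet {P I : Set R} (hP : IsHyperidealOrEmpty P)
    (hI : IsHyperidealOrEmpty I) : IsHyperidealOrEmpty (haddSet P I) := by
  refine ⟨fun x hx y hy z hz => ?_, fun r x hx => ?_⟩
  · obtain ⟨p, hp, i, hi, hx⟩ := mem_haddSet.1 hx
    obtain ⟨q, hq, j, hj, hy⟩ := mem_haddSet.1 hy
    obtain ⟨w, hw, k, hk, hz⟩ := mem_hadd_hadd_comm hx hy hz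
    exact mem_haddSet.2 ⟨w, hP.1 p hp q hq hw, k, hI.1 i hi j hj hk, hz⟩
  · obtain ⟨p, hp, i, hi, hx⟩ := mem_haddSet.1 hx
    exact ⟨mem_haddSet.2 ⟨_, (hP.2 r p hp).1, _, (hI.2 r i hi).1, mul_mem_hadd_mul_left r hx⟩,
      mem_haddSet.2 ⟨_, (hP.2 r p hp).2, _, (hI.2 r i hi).2, mul_mem_hadd_mul_right r hx⟩⟩

theorem IsHyperideal.zero_mem {I : Set R} (hI : IsHyperideal I) : zero ∈ I := by
  obtain ⟨x, hx⟩ := hI.1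
  simpa only [zero_mul] using (hI.2.2 zero x hx).1

theorem subset_haddSet_left {P I : Set R} (hI : zero ∈ I) : P ⊆ haddSet P I :=
  fun p hp => mem_haddSet.2 ⟨p, hp, zero, hI, by simp [hadd_zero]⟩

theorem subset_haddSet_right {P I : Set R} (hP : zero ∈ P) : I ⊆ haddSet P I :=
  fun i hi => mem_haddSet.2 ⟨zero, hP, i, hi, by simp [zero_hadd]⟩

theorem IsHyperideal.hsumList_subset {I : Set R} (hI : IsHyperideal I) {l : List R}
    (hl : ∀ x ∈ l, x ∈ I) : hsumList l ⊆ I := by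
  induction l with
  | nil => simpa [hsumList] using hI.zero_mem
  | cons x xs ih =>
    intro z hz
    simp only [hsumList, mem_haddSet, Set.mem_singleton_iff, exists_eq_left] at hz
    obtain ⟨w, hw, hz⟩ := hz
    exact hI.2.1 x (hl x (by simp)) w (ih (fun y hy => hl y (by simp [hy])) hw) hz

theorem IsHyperideal.setProd_subset {P A B : Set R} (hP : IsHyperideal P)
    (h : ∀ x ∈ A, ∀ y ∈ B, mul x y ∈ P) : setProd A B ⊆ P := by
  rintro z ⟨l, -, hl, hz⟩
  refine hP.hsumList_subset (fun t ht => ?_) hz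
  obtain ⟨p, hp, rfl⟩ := List.mem_map.1 ht
  exact h _ (hl p hp).1 _ (hl p hp).2

theorem IsHyperideal.mul_mem_of_mem_haddSet {P I J : Set R} (hP : IsHyperideal P)
    (hIJ : ∀ i ∈ I, ∀ j ∈ J, mul i j ∈ P) {x y : R} (hx : x ∈ haddSet P I)
    (hy : y ∈ haddSet P J) : mul x y ∈ P := by
  obtain ⟨p, hp, i, hi, hx⟩ := mem_haddSet.1 hx
  obtain ⟨q, hq, j, hj, hy⟩ := mem_haddSet.1 hy
  have hiy : mul i y ∈ P :=
    hP.2.1 _ (hP.2.2 i q hq).1 _ (hIJ i hi j hj) (mul_mem_hadd_mul_left i hy)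
  exact hP.2.1 _ (hP.2.2 y p hp).2 _ hiy (mul_mem_hadd_mul_right y hx)

theorem subset_or_subset_of_setProd_subset (hfi : FullyIdempotent R) {P : Set R} {a : R}
    (hmax : Maximal (fun Q => IsHyperidealOrEmpty Q ∧ a ∉ Q) P) {I J : Set R}
    (hI : IsHyperideal I) (hJ : IsHyperideal J) (hIJ : setProd I J ⊆ P) : I ⊆ P ∨ J ⊆ P := by
  by_contra! hIJP
  obtain ⟨i, hi⟩ := hI.1
  obtain ⟨j, hj⟩ := hJ.1
  have hP : IsHyperideal P := hmax.prop.1.isHyperideal ⟨_, hIJ (mul_mem_setProd hi hj)⟩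
  have mem_haddSet_of_not_subset {K : Set R} (hK : IsHyperideal K) (hKP : ¬K ⊆ P) :
      a ∈ haddSet P K := by
    by_contra ha
    have hle := hmax.2 ⟨hP.isHyperidealOrEmpty.haddSet hK.isHyperidealOrEmpty, ha⟩
      (subset_haddSet_left hK.zero_mem)
    exact hKP ((subset_haddSet_right hP.zero_mem).trans hle)
  have haI := mem_haddSet_of_not_subset hI hIJP.1
  have haJ := mem_haddSet_of_not_subset hJ hIJP.2
  set K := haddSet P I ∩ haddSet P J
  have hK : IsHyperideal K :=
    ((hP.isHyperidealOrEmpty.haddSet hI.isHyperidealOrEmpty).inter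
      (hP.isHyperidealOrEmpty.haddSet hJ.isHyperidealOrEmpty)).isHyperideal ⟨a, haI, haJ⟩
  have haK : a ∈ setProd K K := (hfi K hK).symm ▸ ⟨haI, haJ⟩
  refine hmax.prop.2 (hP.setProd_subset (fun x hx y hy => ?_) haK)
  exact hP.mul_mem_of_mem_haddSet (fun i hi j hj => hIJ (mul_mem_setProd hi hj)) hx.1 hy.2

theorem exists_maximal_hyperidealOrEmpty_notMem {U : Set R} {a : R}
    (hU : IsHyperidealOrEmpty U) (ha : a ∉ U) :
    ∃ P, U ⊆ P ∧ Maximal (fun Q => IsHyperidealOrEmpty Q ∧ a ∉ Q) P := by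
  refine zorn_subset_nonempty {Q | IsHyperidealOrEmpty Q ∧ a ∉ Q}
    (fun c hc hchain _ => ?_) U ⟨hU, ha⟩
  refine ⟨⋃₀ c, ⟨IsHyperidealOrEmpty.sUnion (fun P hP => (hc hP).1) hchain, ?_⟩,
    fun P hP => Set.subset_sUnion_of_mem hP⟩
  rintro ⟨P, hP, haP⟩
  exact (hc hP).2 haP

theorem IsFuzzyHyperideal.isHyperidealOrEmpty_preimage {μ : R → unitInterval}
    (hμ : IsFuzzyHyperideal μ) {T : Set unitInterval} (hT : IsUpperSet T) :
    IsHyperidealOrEmpty (μ ⁻¹' T) := by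
  refine ⟨fun x hx y hy z hz => ?_, fun r x hx =>
    ⟨hT (le_sup_right.trans (hμ.2 r x)) hx, hT (le_sup_left.trans (hμ.2 x r)) hx⟩⟩
  have hxyz : μ x ⊓ μ y ≤ μ z := (hμ.1 x y).trans (biInf_le μ hz)
  rcases le_total (μ x) (μ y) with hxy | hxy
  · exact hT (inf_eq_left.2 hxy ▸ hxyz) hx
  · exact hT (inf_eq_right.2 hxy ▸ hxyz) hy

theorem le_fprod_of_mem_setProd {lam mu : R → unitInterval} {c : unitInterval} {A B : Set R}
    (hA : ∀ x ∈ A, c ≤ lam x) (hB : ∀ y ∈ B, c ≤ mu y) {z : R} (hz : z ∈ setProd A B) :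
    c ≤ fprod lam mu z := by
  obtain ⟨l, hl, hAB, hzl⟩ := hz
  exact le_sSup_of_le ⟨l, hl, hzl, rfl⟩
    (le_iInf₂ fun p hp => le_inf (hA _ (hAB p hp).1) (hB _ (hAB p hp).2))

open Classical in
noncomputable def fuzzyIndicator {α : Type*} (P : Set α) (s : unitInterval) (x : α) :
    unitInterval :=
  if x ∈ P then 1 else s

theorem le_fuzzyIndicator_of_mem {α : Type*} {P : Set α} (s t : unitInterval) {x : α}
    (hx : x ∈ P) : t ≤ fuzzyIndicator P s x := by
  simpa [fuzzyIndicator, hx] using unitInterval.le_one'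

theorem fuzzyIndicator_of_notMem {α : Type*} {P : Set α} (s : unitInterval) {x : α} (hx : x ∉ P) :
    fuzzyIndicator P s x = s := by
  simp [fuzzyIndicator, hx]

theorem le_fuzzyIndicator {α : Type*} (P : Set α) (s : unitInterval) (x : α) :
    s ≤ fuzzyIndicator P s x := by
  by_cases hx : x ∈ P
  · exact le_fuzzyIndicator_of_mem s s hx
  · exact (fuzzyIndicator_of_notMem s hx).ge

theorem le_fuzzyIndicator_of_le {α : Type*} {P : Set α} {s : unitInterval} {f : α → unitInterval}
    (hf : ∀ x ∉ P, f x ≤ s) : f ≤ fuzzyIndicator P s := fun x => by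
  by_cases hx : x ∈ P
  · exact le_fuzzyIndicator_of_mem s _ hx
  · exact (hf x hx).trans (fuzzyIndicator_of_notMem s hx).ge

theorem IsHyperidealOrEmpty.isFuzzyHyperideal_fuzzyIndicator {P : Set R}
    (hP : IsHyperidealOrEmpty P) (s : unitInterval) :
    IsFuzzyHyperideal (fuzzyIndicator P s) := by
  have off_le {x : R} (hx : x ∉ P) (z : R) : fuzzyIndicator P s x ≤ fuzzyIndicator P s z :=
    (fuzzyIndicator_of_notMem s hx).trans_le (le_fuzzyIndicator P s z)
  refine ⟨fun x y => le_iInf₂ fun z hz => ?_, fun x y => sup_le ?_ ?_⟩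
  · by_cases hx : x ∈ P
    · by_cases hy : y ∈ P
      · exact le_fuzzyIndicator_of_mem s _ (hP.1 x hx y hy hz)
      · exact inf_le_right.trans (off_le hy z)
    · exact inf_le_left.trans (off_le hx z)
  · by_cases hx : x ∈ P
    · exact le_fuzzyIndicator_of_mem s _ (hP.2 y x hx).2
    · exact off_le hx _
  · by_cases hy : y ∈ P
    · exact le_fuzzyIndicator_of_mem s _ (hP.2 x y hy).1
    · exact off_le hy _

theorem isFuzzyPrimeHyperideal_fuzzyIndicator {P : Set R} (hP : IsHyperidealOrEmpty P)
    (hprime : ∀ I J : Set R, IsHyperideal I → IsHyperideal J → setProd I J ⊆ P →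
      I ⊆ P ∨ J ⊆ P) (s : unitInterval) :
    IsFuzzyPrimeHyperideal (fuzzyIndicator P s) := by
  refine ⟨hP.isFuzzyHyperideal_fuzzyIndicator s, fun lam mu hlam hmu hle => ?_⟩
  by_contra! hlm
  have above {f : R → unitInterval} (hf : ¬f ≤ fuzzyIndicator P s) :
      ∃ x, x ∉ P ∧ s < f x := by
    obtain ⟨x, hx⟩ := not_forall.1 hf
    have hxP : x ∉ P := fun hxP => hx (le_fuzzyIndicator_of_mem s _ hxP)
    exact ⟨x, hxP, fuzzyIndicator_of_notMem s hxP ▸ not_le.1 hx⟩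
  obtain ⟨x, hxP, hx⟩ := above hlm.1
  obtain ⟨y, hyP, hy⟩ := above hlm.2
  let I := lam ⁻¹' Set.Ici (lam x)
  let J := mu ⁻¹' Set.Ici (mu y)
  have hxI : x ∈ I := Set.mem_preimage.2 (Set.mem_Ici.2 le_rfl)
  have hyJ : y ∈ J := Set.mem_preimage.2 (Set.mem_Ici.2 le_rfl)
  have hI : IsHyperideal I :=
    (hlam.isHyperidealOrEmpty_preimage (isUpperSet_Ici _)).isHyperideal ⟨x, hxI⟩
  have hJ : IsHyperideal J :=
    (hmu.isHyperidealOrEmpty_preimage (isUpperSet_Ici _)).isHyperideal ⟨y, hyJ⟩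
  have hIJ : setProd I J ⊆ P := fun z hz => by
    by_contra hzP
    have hz : lam x ⊓ mu y ≤ fprod lam mu z :=
      le_fprod_of_mem_setProd (fun _ h => inf_le_left.trans h) (fun _ h => inf_le_right.trans h) hz
    exact (lt_inf_iff.2 ⟨hx, hy⟩).not_ge
      (hz.trans ((hle z).trans (fuzzyIndicator_of_notMem s hzP).le))
  rcases hprime I J hI hJ hIJ with hIP | hJP
  · exact hxP (hIP hxI)
  · exact hyP (hJP hyJ)

theorem le_of_O_subset (hfi : FullyIdempotent R) {d1 d2 : R → unitInterval}
    (h2 : IsFuzzyHyperideal d2) (hO : O d1 ⊆ O d2) : d1 ≤ d2 := by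
  intro a
  by_contra! ha
  obtain ⟨P, hUP, hmax⟩ := exists_maximal_hyperidealOrEmpty_notMem
    (h2.isHyperidealOrEmpty_preimage (isUpperSet_Ioi _)) (lt_irrefl (d2 a))
  set η := fuzzyIndicator P (d2 a)
  have hηa : η a = d2 a := fuzzyIndicator_of_notMem _ hmax.prop.2
  have hprime : IsFuzzyPrimeHyperideal η := isFuzzyPrimeHyperideal_fuzzyIndicator hmax.prop.1
    (fun _ _ => subset_or_subset_of_setProd_subset hfi hmax) (d2 a)
  have hproper : η ≠ fun _ => 1 := fun h =>
    (ha.trans_le unitInterval.le_one').ne (hηa.symm.trans (congrFun h a))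
  have hd2η : d2 ≤ η := le_fuzzyIndicator_of_le fun x hx => not_lt.1 fun h => hx (hUP h)
  exact (hO ⟨⟨hprime, hproper⟩, fun h => (h a).not_gt (hηa ▸ ha)⟩).2 hd2η

end Semihyperring

open Semihyperring in
/-- in a fully idempotent semihyperring, `O δ₁ = O δ₂` iff `δ₁ = δ₂`, for
fuzzy hyperideals `δ₁, δ₂`. -/
theorem O_injective {R : Type*} [Semihyperring R] (h : FullyIdempotent R)
    (d1 d2 : R → unitInterval) (h1 : IsFuzzyHyperideal d1) (h2 : IsFuzzyHyperideal d2) :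
    O d1 = O d2 ↔ d1 = d2 :=
  ⟨fun hO => le_antisymm (le_of_O_subset h h2 hO.le) (le_of_O_subset h h1 hO.ge),
    fun hd => hd ▸ rfl⟩
end

section
/- Let (R, ⊕, ·) be a fully idempotent semihyperring. For fuzzy hyperideals δ₁, δ₂ of R, O_{δ₁} ∩ O_{δ₂} = O_{min(δ₁, δ₂)}, where min(δ₁, δ₂) is the pointwise minimum (which is a fuzzy hyperideal of R). -/
/-! Every product `λμ` of fuzzy hyperideals lies below `λ ⊓ μ`: each term `λ yᵢ ⊓ μ zᵢ` is
bounded by both `λ (yᵢzᵢ)` and `μ (yᵢzᵢ)`, and fuzzy hyperideals are closed under hypersums.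
Hence a fuzzy prime hyperideal above `λ ⊓ μ` lies above `λ` or above `μ`. -/

namespace Semihyperring

variable {R : Type*} [Semihyperring R]

lemma mem_haddSet_singleton {a x : R} {S : Set R} :
    x ∈ haddSet {a} S ↔ ∃ w ∈ S, x ∈ hadd a w := by
  simp [haddSet]

lemma le_of_mem_hsumList {μ : R → unitInterval}
    (hμ : ∀ x y : R, μ x ⊓ μ y ≤ ⨅ z ∈ hadd x y, μ z) {t : unitInterval} :
    ∀ {L : List R}, L ≠ [] → (∀ a ∈ L, t ≤ μ a) → ∀ x ∈ hsumList L, t ≤ μ x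
  | [], hL, _, _, _ => absurd rfl hL
  | [a], _, ht, x, hx => by
    obtain ⟨w, rfl, hxw⟩ := mem_haddSet_singleton.mp hx
    rw [hadd_zero, Set.mem_singleton_iff] at hxw
    exact hxw ▸ ht a List.mem_cons_self
  | a :: b :: L, _, ht, x, hx => by
    obtain ⟨w, hw, hxw⟩ := mem_haddSet_singleton.mp hx
    have htw : t ≤ μ w :=
      le_of_mem_hsumList hμ (List.cons_ne_nil b L)
        (fun c hc => ht c (List.mem_cons_of_mem a hc)) w hw
    calc t ≤ μ a ⊓ μ w := le_inf (ht a List.mem_cons_self) htw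
      _ ≤ ⨅ z ∈ hadd a w, μ z := hμ a w
      _ ≤ μ x := biInf_le μ hxw

lemma IsFuzzyHyperideal.isFuzzyRightHyperideal {μ : R → unitInterval}
    (hμ : IsFuzzyHyperideal μ) : IsFuzzyRightHyperideal μ :=
  ⟨hμ.1, fun x y => le_sup_left.trans (hμ.2 x y)⟩

lemma IsFuzzyHyperideal.isFuzzyLeftHyperideal {μ : R → unitInterval}
    (hμ : IsFuzzyHyperideal μ) : IsFuzzyLeftHyperideal μ :=
  ⟨hμ.1, fun x y => le_sup_right.trans (hμ.2 x y)⟩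

lemma fprod_le_of_forall_le {lam mu ν : R → unitInterval}
    (hν : ∀ x y : R, ν x ⊓ ν y ≤ ⨅ z ∈ hadd x y, ν z)
    (hle : ∀ y z : R, lam y ⊓ mu z ≤ ν (mul y z)) : fprod lam mu ≤ ν := by
  intro x
  refine sSup_le ?_
  rintro t ⟨l, hl, hx, rfl⟩
  refine le_of_mem_hsumList hν (by simpa using hl) ?_ x hx
  simp only [List.mem_map]
  rintro _ ⟨p, hp, rfl⟩
  exact (biInf_le (fun p : R × R => lam p.1 ⊓ mu p.2) hp).trans (hle p.1 p.2)

lemma fprod_le_left {lam mu : R → unitInterval} (hlam : IsFuzzyRightHyperideal lam) :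
    fprod lam mu ≤ lam :=
  fprod_le_of_forall_le hlam.1 fun y z => inf_le_left.trans (hlam.2 y z)

lemma fprod_le_right {lam mu : R → unitInterval} (hmu : IsFuzzyLeftHyperideal mu) :
    fprod lam mu ≤ mu :=
  fprod_le_of_forall_le hmu.1 fun y z => inf_le_right.trans (hmu.2 y z)

lemma IsFuzzyPrimeHyperideal.le_or_le_of_inf_le {η lam mu : R → unitInterval}
    (hη : IsFuzzyPrimeHyperideal η) (hlam : IsFuzzyHyperideal lam)
    (hmu : IsFuzzyHyperideal mu) (hle : lam ⊓ mu ≤ η) : lam ≤ η ∨ mu ≤ η :=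
  hη.2 lam mu hlam hmu <|
    (le_inf (fprod_le_left hlam.isFuzzyRightHyperideal)
      (fprod_le_right hmu.isFuzzyLeftHyperideal)).trans hle

lemma O_mono : Monotone (O : (R → unitInterval) → Set (R → unitInterval)) :=
  fun _ _ hle _ ⟨hmu, hn⟩ => ⟨hmu, fun h => hn (hle.trans h)⟩

end Semihyperring

open Semihyperring in
theorem O_inter_general {R : Type*} [Semihyperring R]
    (d1 d2 : R → unitInterval) (h1 : IsFuzzyHyperideal d1) (h2 : IsFuzzyHyperideal d2) :
    O d1 ∩ O d2 = O (d1 ⊓ d2) := by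
  refine le_antisymm ?_ (Set.subset_inter (O_mono inf_le_left) (O_mono inf_le_right))
  rintro mu ⟨⟨hmu, hn1⟩, -, hn2⟩
  exact ⟨hmu, fun hle => (hmu.1.le_or_le_of_inf_le h1 h2 hle).elim hn1 hn2⟩

open Semihyperring in
/-- in a fully idempotent semihyperring, `O δ₁ ∩ O δ₂ = O (min (δ₁, δ₂))`
for fuzzy hyperideals `δ₁, δ₂`. -/
theorem O_inter {R : Type*} [Semihyperring R] (h : FullyIdempotent R)
    (d1 d2 : R → unitInterval) (h1 : IsFuzzyHyperideal d1) (h2 : IsFuzzyHyperideal d2) :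
    O d1 ∩ O d2 = O (d1 ⊓ d2) :=
  O_inter_general d1 d2 h1 h2
end
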